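/- Let y be a real number with 1 < y < √3 and define v₀(y) := max{V₃, 2C₃/|y²−3| + 1} with the constants C₁, C₂, C₃, V₁, V₂, V₃ as specified. Then for every real v ≥ v₀(y) one has G(v,y) > 1, where G(v,y) := v·∫_1^{√(v/(v−2))} ((v+y²)/(v+y²x²))^{(v+1)/2} dx. -/

import Mathlib

open MeasureTheory Real intervalIntegral

/-- The comparison function `G(v, y)`. -/
noncomputable def G (v y : ℝ) : ℝ :=
  v * ∫ x in (1 : ℝ)..Real.sqrt (v / (v - 2)),
    ((v + y ^ 2) / (v + y ^ 2 * x ^ 2)) ^ ((v + 1) / 2)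

/-!
By Bernoulli's inequality the integrand is at least `1 - c (x² - 1)` with
`c = (v + 1) y² / (2 (v + y²))`, whose integral over `[1, b]`, `b = √(v / (v - 2))`, is explicit.
Since `2 / (2v - 3) ≤ b - 1 ≤ 1 / (v - 2)`, the main term `v (b - 1)` is at least `1 + 3 / (2v - 3)`,
while the quadratic correction is at most `(v + 1) y² (3v - 5) / (6 (v - 2)³)`; the latter is smaller
than `3 / (2v - 3)` as soon as `(3 - y²) v ≥ 22`, which the choice of `v₀` guarantees.
-/

lemma one_sub_mul_sq_sub_one_le_integrand {v x : ℝ} (y : ℝ) (hv : 1 ≤ v) (hx : 1 ≤ x) :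
    1 - (v + 1) / 2 * y ^ 2 / (v + y ^ 2) * (x ^ 2 - 1)
      ≤ ((v + y ^ 2) / (v + y ^ 2 * x ^ 2)) ^ ((v + 1) / 2) := by
  have hN : 0 < v + y ^ 2 := by positivity
  have hD : 0 < v + y ^ 2 * x ^ 2 := by positivity
  have hx2 : 0 ≤ y ^ 2 * (x ^ 2 - 1) := mul_nonneg (sq_nonneg y) (by nlinarith)
  set s := -(y ^ 2 * (x ^ 2 - 1) / (v + y ^ 2 * x ^ 2)) with hs
  have hbase : (v + y ^ 2) / (v + y ^ 2 * x ^ 2) = 1 + s := by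
    rw [hs]; field_simp; ring
  have hs1 : -1 ≤ s := by
    rw [hs, neg_le_neg_iff, div_le_one hD]; nlinarith [sq_nonneg y]
  calc 1 - (v + 1) / 2 * y ^ 2 / (v + y ^ 2) * (x ^ 2 - 1)
      = 1 - (v + 1) / 2 * (y ^ 2 * (x ^ 2 - 1) / (v + y ^ 2)) := by ring
    _ ≤ 1 - (v + 1) / 2 * (y ^ 2 * (x ^ 2 - 1) / (v + y ^ 2 * x ^ 2)) := by
      gcongr 1 - _ * ?_
      exact div_le_div_of_nonneg_left hx2 hN (by nlinarith [sq_nonneg y])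
    _ = 1 + (v + 1) / 2 * s := by rw [hs]; ring
    _ ≤ (1 + s) ^ ((v + 1) / 2) := one_add_mul_self_le_rpow_one_add hs1 (by linarith)
    _ = _ := by rw [hbase]

lemma integral_one_sub_mul_sq_sub_one (b c : ℝ) :
    ∫ x in (1 : ℝ)..b, (1 - c * (x ^ 2 - 1)) = (b - 1) - c * ((b - 1) ^ 2 * (b + 2)) / 3 := by
  have h : ∀ x : ℝ, 1 - c * (x ^ 2 - 1) = (1 + c) - c * x ^ 2 := fun x => by ring
  simp_rw [h]
  rw [intervalIntegral.integral_sub intervalIntegrable_const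
    (((continuous_pow 2).const_mul c).intervalIntegrable _ _),
    intervalIntegral.integral_const, intervalIntegral.integral_const_mul, integral_pow]
  simp only [smul_eq_mul]
  ring

lemma sqrt_div_sub_two_sub_one_bounds {v : ℝ} (hv : 2 < v) :
    2 / (2 * v - 3) ≤ √(v / (v - 2)) - 1 ∧ √(v / (v - 2)) - 1 ≤ 1 / (v - 2) := by
  have hv2 : 0 < v - 2 := by linarith
  set b := √(v / (v - 2))
  have hb0 : 0 ≤ b := sqrt_nonneg _
  have hbsq : b ^ 2 * (v - 2) = v := by
    rw [sq_sqrt (by positivity)]; field_simp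
  have hupper : b ≤ (v - 1) / (v - 2) := by
    rw [le_div_iff₀ hv2]; nlinarith
  refine ⟨?_, by rw [le_div_iff₀ hv2] at hupper ⊢; linarith⟩
  -- b - 1 = 2 / ((v - 2) (b + 1)), and b + 1 ≤ (2v - 3)/(v - 2)
  have hb1 : 1 ≤ b := one_le_sqrt.mpr ((one_le_div hv2).mpr (by linarith))
  rw [div_le_iff₀ (by linarith)]
  rw [le_div_iff₀ hv2] at hupper
  nlinarith [mul_le_mul_of_nonneg_left hupper (by linarith : 0 ≤ b - 1)]

lemma quadratic_lower_bound_le_G {v : ℝ} (y : ℝ) (hv : 2 < v) :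
    v * ((√(v / (v - 2)) - 1) - (v + 1) / 2 * y ^ 2 / (v + y ^ 2)
      * ((√(v / (v - 2)) - 1) ^ 2 * (√(v / (v - 2)) + 2)) / 3) ≤ G v y := by
  have hb : 1 ≤ √(v / (v - 2)) := one_le_sqrt.mpr ((one_le_div (by linarith)).mpr (by linarith))
  have hcont : Continuous fun x : ℝ => ((v + y ^ 2) / (v + y ^ 2 * x ^ 2)) ^ ((v + 1) / 2) :=
    (continuous_const.div (by fun_prop) fun x => by positivity).rpow_const
      fun _ => Or.inr (by positivity)
  rw [G, ← integral_one_sub_mul_sq_sub_one]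
  gcongr
  exact integral_mono_on hb ((by fun_prop : Continuous _).intervalIntegrable _ _)
    (hcont.intervalIntegrable _ _)
    fun x hx => one_sub_mul_sq_sub_one_le_integrand y (by linarith) hx.1

lemma cubic_lt_of_le_three_sub_sq_mul {v y : ℝ} (hv : 3 ≤ v) (h : 22 ≤ (3 - y ^ 2) * v) :
    (v + 1) * y ^ 2 * (3 * v - 5) * (2 * v - 3) < 18 * (v - 2) ^ 3 := by
  nlinarith [mul_le_mul_of_nonneg_right h (by nlinarith : 0 ≤ 6 * v ^ 2 - 13 * v - 4)]

theorem one_lt_G {v y : ℝ} (hv : 3 ≤ v) (h : 22 ≤ (3 - y ^ 2) * v) : 1 < G v y := by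
  obtain ⟨hu_lower, hu_upper⟩ := sqrt_div_sub_two_sub_one_bounds (by linarith : 2 < v)
  set u := √(v / (v - 2)) - 1 with hu_def
  set c := (v + 1) / 2 * y ^ 2 / (v + y ^ 2)
  have hv2 : 0 < v - 2 := by linarith
  have h2v : 0 < 2 * v - 3 := by linarith
  have hu : 0 ≤ u := le_trans (by positivity) hu_lower
  have hvu : 1 + 3 / (2 * v - 3) ≤ v * u := by
    calc 1 + 3 / (2 * v - 3) = v * (2 / (2 * v - 3)) := by field_simp; ring
      _ ≤ v * u := by gcongr
  have hcv : v * c ≤ (v + 1) * y ^ 2 / 2 := by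
    rw [show v * c = (v + 1) * y ^ 2 / 2 * (v / (v + y ^ 2)) by ring]
    exact mul_le_of_le_one_right (by positivity) ((div_le_one (by positivity)).mpr (by nlinarith))
  have hu3 : u ^ 2 * (u + 3) ≤ (3 * v - 5) / (v - 2) ^ 3 := by
    calc u ^ 2 * (u + 3) ≤ (1 / (v - 2)) ^ 2 * (1 / (v - 2) + 3) := by gcongr
      _ = (3 * v - 5) / (v - 2) ^ 3 := by field_simp; ring
  have hloss : v * c * (u ^ 2 * (u + 3)) / 3 < 3 / (2 * v - 3) := by
    calc v * c * (u ^ 2 * (u + 3)) / 3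
        ≤ (v + 1) * y ^ 2 / 2 * ((3 * v - 5) / (v - 2) ^ 3) / 3 := by gcongr
      _ < 3 / (2 * v - 3) := by
        rw [div_lt_div_iff₀ (by norm_num) (by linarith)]
        field_simp
        linarith [cubic_lt_of_le_three_sub_sq_mul hv h]
  calc (1 : ℝ) < v * u - v * c * (u ^ 2 * (u + 3)) / 3 := by linarith
    _ = v * (u - c * (u ^ 2 * (√(v / (v - 2)) + 2)) / 3) := by rw [hu_def]; ring
    _ ≤ G v y := quadratic_lower_bound_le_G y (by linarith)

theorem stmt_13 (y C₁ C₂ C₃ V₁ V₂ V₃ v₀ : ℝ)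
    (hy1 : 1 < y) (hy2 : y < Real.sqrt 3)
    (hC₁ : C₁ = 2 * y ^ 6 + (3 / 4) * y ^ 4)
    (hC₂ : C₂ = (9 / 4) * C₁ + (25 / 32) * y ^ 8
        + (3 / 2) * (C₁ ^ ((2 : ℝ) / 3) * y ^ ((8 : ℝ) / 3)
          + C₁ ^ ((1 : ℝ) / 3) * y ^ ((16 : ℝ) / 3)))
    (hC₃ : C₃ = (13 / 3) * y ^ 4 + 18 * y ^ 2 + 2 * C₂ + 11)
    (hV₁ : V₁ = max 100 (8 * y ^ 2))
    (hV₂ : V₂ = max V₁ (max ((3 / 2) * y ^ 4) (Real.sqrt (2 * C₁))))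
    (hV₃ : V₃ = max V₂ (max (2 + 2 * y ^ 2 / (1 + 2 * y))
        (2 + 2 * y ^ 4 / (1 + 2 * y ^ 2))))
    (hv₀ : v₀ = max V₃ (2 * C₃ / |y ^ 2 - 3| + 1)) :
    ∀ v : ℝ, v₀ ≤ v → 1 < G v y := by
  intro v hv
  simp only [hv₀, hV₃, hV₂, hV₁, max_le_iff] at hv
  obtain ⟨⟨⟨⟨h100, -⟩, -⟩, -⟩, hC₃v⟩ := hv
  have hy0 : 0 ≤ y := by linarith
  have hy3 : 0 < 3 - y ^ 2 := by nlinarith [(lt_sqrt hy0).mp hy2]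
  have hC₁0 : 0 ≤ C₁ := by rw [hC₁]; positivity
  have hC₂0 : 0 ≤ C₂ := by rw [hC₂]; positivity
  have hC₃11 : 11 ≤ C₃ := by rw [hC₃]; linarith [pow_nonneg hy0 4, sq_nonneg y]
  rw [abs_sub_comm, abs_of_pos hy3, ← le_sub_iff_add_le, div_le_iff₀ hy3] at hC₃v
  exact one_lt_G (by linarith) (by nlinarith)
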